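/- arXiv:0807.2714 — 4 statements merged into one kernel-verified Lean document; each statement's English description precedes it below -/
import Mathlib

section
/- Fix integers n ≥ 2 and r−1 ≥ 1. Let λ ∈ ℤ^n be dominant, i.e. λ_1 ≥ λ_2 ≥ … ≥ λ_n ≥ 0, with λ_i − λ_{i+1} ≥ 2(r−1) for all 1 ≤ i ≤ n−1. Suppose μ ∈ ℤ^n satisfies σ(μ)_i = σ(λ)_i for all i and there exist integers m_1, …, m_n with μ_i = λ_i + (r−1)m_i and ρ(μ)_i = ρ(λ)_i + m_i for all 1 ≤ i ≤ n. Then μ = λ. -/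
open scoped Classical

namespace CCnDAHA

variable {n : ℕ}




/-- σ(λ)_i = +1 if λ_i ≥ 0, −1 otherwise. -/
def sgn (lam : Fin n → ℤ) (i : Fin n) : ℤ := if 0 ≤ lam i then 1 else -1

/-- `Prec lam i j` : index `i` strictly precedes `j` in the ordering i_1,…,i_n. -/
def Prec (lam : Fin n → ℤ) (i j : Fin n) : Prop :=
  |lam j| < |lam i| ∨
    (|lam i| = |lam j| ∧
      ((0 ≤ lam i ∧ lam j < 0) ∨
       (0 ≤ lam i ∧ 0 ≤ lam j ∧ i < j) ∨
       (lam i < 0 ∧ lam j < 0 ∧ j < i)))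

/-- 0-based position of index `i` in the ordering i_1,…,i_n (position m−1). -/
noncomputable def posOf (lam : Fin n → ℤ) (i : Fin n) : ℕ :=
  (Finset.univ.filter (fun j => Prec lam j i)).card

/-- ρ(λ)_i = σ(λ)_i · (n − m) where i = i_m. -/
noncomputable def rho (lam : Fin n → ℤ) (i : Fin n) : ℤ :=
  sgn lam i * ((n : ℤ) - 1 - (posOf lam i : ℤ))

/-- (a,b)-neighborhood. -/
noncomputable def IsNbhd (a b : ℤ) (lam : Fin n → ℤ) (i j : Fin n) : Prop :=
  |rho lam i| - |rho lam j| = a - 1 ∧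
  |lam i| - |lam j| ≤ b ∧
  (|lam i| - |lam j| = b →
    ((0 ≤ lam i ∧ 0 ≤ lam j ∧ j < i) ∨
     (lam i < 0 ∧ lam j < 0 ∧ i < j) ∨
     (lam i < 0 ∧ 0 ≤ lam j)))

/-- (a,b)-admissible: no (a,b)-neighborhood. -/
noncomputable def Admissible (a b : ℤ) (lam : Fin n → ℤ) : Prop :=
  ∀ i j, ¬ IsNbhd a b lam i j

/-- number of (a,b)-neighborhoods. -/
noncomputable def nbhdCount (a b : ℤ) (lam : Fin n → ℤ) : ℕ :=
  ((Finset.univ : Finset (Fin n × Fin n)).filter (fun p => IsNbhd a b lam p.1 p.2)).card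

/-- dot action of the affine simple reflection s_i (0 ≤ i ≤ n, 1-based paper indexing). -/
noncomputable def dotAct (i : ℕ) (lam : Fin n → ℤ) : Fin n → ℤ := fun j =>
  if i = 0 then (if (j : ℕ) = 0 then -1 - lam j else lam j)
  else if i = n then (if (j : ℕ) + 1 = n then -lam j else lam j)
  else if h1 : (j : ℕ) + 1 = i ∧ i < n then lam ⟨(j : ℕ) + 1, by omega⟩
  else if h2 : (j : ℕ) = i then lam ⟨(j : ℕ) - 1, by have := j.isLt; omega⟩
  else lam j

/-- pairing ⟨λ, α_i⟩, for 0 ≤ i ≤ n. -/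
noncomputable def pairing (i : ℕ) (lam : Fin n → ℤ) : ℤ :=
  if hn : n = 0 then 0
  else if i = 0 then -2 * lam ⟨0, by omega⟩
  else if i = n then 2 * lam ⟨n - 1, by omega⟩
  else lam ⟨(i - 1) % n, Nat.mod_lt _ (by omega)⟩ - lam ⟨i % n, Nat.mod_lt _ (by omega)⟩

/-- partial sum λ_1 + ⋯ + λ_j. -/
def psum (lam : Fin n → ℤ) (j : Fin n) : ℤ :=
  ∑ i ∈ Finset.univ.filter (fun i => i ≤ j), lam i

/-- dominance order: μ ≤ λ. -/
def DomLE (mu lam : Fin n → ℤ) : Prop := ∀ j, psum mu j ≤ psum lam j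

/-- λ⁺ : the weakly decreasing rearrangement of (|λ_1|,…,|λ_n|). -/
noncomputable def lamPlus (lam : Fin n → ℤ) : Fin n → ℤ := fun j =>
  ((Multiset.sort (Multiset.map (fun i => |lam i|) Finset.univ.val) (· ≤ ·)).reverse).getD (j : ℕ) 0

/-- λ ≻ μ. -/
noncomputable def SuccOrd (lam mu : Fin n → ℤ) : Prop :=
  (DomLE (lamPlus mu) (lamPlus lam) ∧ lamPlus lam ≠ lamPlus mu) ∨
  (lamPlus lam = lamPlus mu ∧ DomLE mu lam ∧ lam ≠ mu)

/-- |λ_{i_m}|, with the sentinel value 0 at m = n+1. -/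
noncomputable def absAt (lam : Fin n → ℤ) (m : ℕ) : ℤ :=
  if m = n + 1 then 0
  else ∑ i ∈ Finset.univ.filter (fun i => posOf lam i + 1 = m), |lam i|

/-- σ(λ)_{i_m}, with sentinel value +1 at m = n+1. -/
noncomputable def sgAt (lam : Fin n → ℤ) (m : ℕ) : ℤ :=
  if m = n + 1 then 1
  else ∑ i ∈ Finset.univ.filter (fun i => posOf lam i + 1 = m), sgn lam i

/-- the (1-based) value of the index i_m, with sentinel value n+1 at m = n+1. -/
noncomputable def ixAt (lam : Fin n → ℤ) (m : ℕ) : ℕ :=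
  if m = n + 1 then n + 1
  else ∑ i ∈ Finset.univ.filter (fun i => posOf lam i + 1 = m), ((i : ℕ) + 1)

/-- β_m ∈ {0,1}. -/
noncomputable def betaAt (lam : Fin n → ℤ) (m : ℕ) : ℤ :=
  if (sgAt lam m = 1 ∧ sgAt lam (m + 1) = 1 ∧ ixAt lam (m + 1) < ixAt lam m) ∨
     (sgAt lam m = -1 ∧ sgAt lam (m + 1) = -1 ∧ ixAt lam m < ixAt lam (m + 1)) ∨
     (sgAt lam m = -1 ∧ sgAt lam (m + 1) = 1)
  then 1 else 0

/-- p_m = ⌊(|λ_{i_m}| − |λ_{i_{m+1}}| − β_m)/b⌋ (b plays the role of r−1). -/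
noncomputable def pAt (b : ℤ) (lam : Fin n → ℤ) (m : ℕ) : ℤ :=
  Int.fdiv (absAt lam m - absAt lam (m + 1) - betaAt lam m) b

/-- the b-quotient λ^{quot} (b plays the role of r−1): j-th entry is p_j + ⋯ + p_n
(1-based j = (j:Fin n) + 1). -/
noncomputable def quotOf (b : ℤ) (lam : Fin n → ℤ) : Fin n → ℤ := fun j =>
  ∑ m ∈ Finset.Icc ((j : ℕ) + 1) n, pAt b lam m

/-- fundamental weight ϖ_j (1-based j = (j : Fin n)+1): first j entries 1, rest 0. -/
def varpi (j : Fin n) : Fin n → ℤ := fun i => if i ≤ j then 1 else 0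



end CCnDAHA

/-!
As `σ(μ) = σ(λ)` and `λ ≥ 0`, also `μ ≥ 0`, so both orderings just sort by decreasing value
(ties by index). Then `ρ(λ)_i = n - i`, hence `m_i = i - π(i)` (0-based), where `π(i)` is the
position of `i` in the ordering for `μ`. If `i < j` but `j` comes first for `μ`, then `μ_i < μ_j`,
and the gap `λ_i - λ_j ≥ 2(r-1)(j-i)` forces `π(i) - π(j) > j - i`. No two consecutive positions
can form such an inversion, so `π⁻¹` is increasing, `π = id` and `m = 0`.
-/

open Finset

section Rank

variable {α : Type*} [LinearOrder α] {n : ℕ} {f : Fin n → α}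

lemma card_filter_apply_lt_lt_of_lt {i j : Fin n} (h : f i < f j) :
    #{k | f k < f i} < #{k | f k < f j} := by
  refine card_lt_card ⟨fun k hk => ?_, fun hsub => ?_⟩
  · simp only [mem_filter, mem_univ, true_and] at hk ⊢
    exact hk.trans h
  · simpa using hsub (mem_filter.2 ⟨mem_univ i, h⟩)

lemma card_filter_apply_lt_lt_card (i : Fin n) : #{k | f k < f i} < n := by
  simpa using card_lt_card (filter_ssubset.2 ⟨i, mem_univ i, lt_irrefl (f i)⟩)

lemma card_filter_apply_lt_lt_iff (hf : Function.Injective f) {i j : Fin n} :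
    #{k | f k < f i} < #{k | f k < f j} ↔ f i < f j := by
  refine ⟨fun h => ?_, card_filter_apply_lt_lt_of_lt⟩
  by_contra hle
  rcases (not_lt.1 hle).lt_or_eq with hlt | heq
  · exact (card_filter_apply_lt_lt_of_lt hlt).not_gt h
  · exact h.ne (by rw [hf heq])

lemma card_filter_apply_lt_of_strictMono (hf : StrictMono f) (i : Fin n) :
    #{k | f k < f i} = i := by
  simp_rw [hf.lt_iff_lt]
  rw [filter_gt_eq_Iio, Fin.card_Iio]

lemma card_filter_apply_lt_injective (hf : Function.Injective f) :
    Function.Injective fun i => #{k | f k < f i} := by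
  intro i j h
  by_contra hne
  rcases lt_or_gt_of_ne (hf.ne hne) with hlt | hlt
  · exact (card_filter_apply_lt_lt_of_lt hlt).ne h
  · exact (card_filter_apply_lt_lt_of_lt hlt).ne' h

end Rank

lemma Fin.mul_sub_le_sub_of_forall_le_sub_succ {n : ℕ} {f : Fin n → ℤ} {d : ℤ}
    (h : ∀ i j : Fin n, (j : ℕ) = i + 1 → d ≤ f i - f j) {i j : Fin n} (hij : i ≤ j) :
    d * (j - i) ≤ f i - f j := by
  rcases n with _ | n
  · exact i.elim0
  have : Antitone fun k : Fin (n + 1) => f k + d * k :=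
    Fin.antitone_iff_succ_le.2 fun k => by
      have := h k.castSucc k.succ (by simp)
      simp only [Fin.val_succ, Fin.val_castSucc]
      push_cast
      linarith
  have := this hij
  simp only at this
  linarith

lemma Equiv.Perm.eq_one_of_forall_add_lt_of_inversion {n : ℕ} (π : Equiv.Perm (Fin n))
    (h : ∀ i j, i < j → π j < π i → (j : ℕ) + π j < i + π i) : π = 1 := by
  suffices StrictMono π.symm by
    ext i
    simpa using congrArg Fin.val (congrFun this.eq_id (π i)).symm
  rcases n with _ | n
  · exact fun i => i.elim0
  refine Fin.strictMono_iff_lt_succ.2 fun a => lt_of_not_ge fun hle => ?_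
  have hne : π.symm a.succ ≠ π.symm a.castSucc := by simp [Fin.ext_iff]
  have := h _ _ (hle.lt_of_ne hne) (by simp)
  simp only [Equiv.apply_symm_apply, Fin.val_succ, Fin.val_castSucc] at this
  exact hle.not_gt (Fin.lt_def.2 (by omega))

namespace CCnDAHA

variable {n : ℕ}

lemma sgn_eq_one_iff {lam : Fin n → ℤ} {i : Fin n} : sgn lam i = 1 ↔ 0 ≤ lam i := by
  unfold sgn; split_ifs <;> simp_all

lemma rho_of_nonneg {lam : Fin n → ℤ} {i : Fin n} (h : 0 ≤ lam i) :
    rho lam i = n - 1 - posOf lam i := by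
  simp [rho, sgn_eq_one_iff.2 h]

/-- `Prec` is the strict order of this key; the entry `2n - i` places negative entries after the
nonnegative ones of equal absolute value, in decreasing index order. -/
def precKey (lam : Fin n → ℤ) (i : Fin n) : Lex (ℤ × ℤ) :=
  toLex (-|lam i|, if 0 ≤ lam i then (i : ℤ) else 2 * n - i)

lemma prec_iff_precKey_lt {lam : Fin n → ℤ} {i j : Fin n} :
    Prec lam i j ↔ precKey lam i < precKey lam j := by
  have hi := i.isLt; have hj := j.isLt
  simp only [Prec, precKey, Prod.Lex.toLex_lt_toLex, Fin.lt_def]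
  split_ifs <;> omega

lemma precKey_injective (lam : Fin n → ℤ) : Function.Injective (precKey lam) := by
  intro i j h
  have hi := i.isLt; have hj := j.isLt
  simp only [precKey, toLex_inj, Prod.mk.injEq] at h
  ext
  split_ifs at h <;> omega

lemma posOf_eq_card (lam : Fin n → ℤ) (i : Fin n) :
    posOf lam i = #{j | precKey lam j < precKey lam i} := by
  simp only [posOf, prec_iff_precKey_lt]

lemma posOf_lt_posOf_iff {lam : Fin n → ℤ} {i j : Fin n} :
    posOf lam i < posOf lam j ↔ Prec lam i j := by
  rw [posOf_eq_card, posOf_eq_card, prec_iff_precKey_lt,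
    card_filter_apply_lt_lt_iff (precKey_injective lam)]

lemma posOf_lt (lam : Fin n → ℤ) (i : Fin n) : posOf lam i < n := by
  rw [posOf_eq_card]
  exact card_filter_apply_lt_lt_card i

lemma posOf_injective (lam : Fin n → ℤ) : Function.Injective (posOf lam) := by
  rw [show posOf lam = _ from funext (posOf_eq_card lam)]
  exact card_filter_apply_lt_injective (precKey_injective lam)

noncomputable def posPerm (lam : Fin n → ℤ) : Equiv.Perm (Fin n) :=
  Equiv.ofBijective (fun i => ⟨posOf lam i, posOf_lt lam i⟩)
    (Finite.injective_iff_bijective.1 fun _ _ h => posOf_injective lam (Fin.val_eq_of_eq h))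

@[simp]
lemma val_posPerm (lam : Fin n → ℤ) (i : Fin n) : (posPerm lam i : ℕ) = posOf lam i := rfl

section Nonneg

variable {lam : Fin n → ℤ}

lemma precKey_of_nonneg {i : Fin n} (h : 0 ≤ lam i) :
    precKey lam i = toLex (-lam i, (i : ℤ)) := by
  simp [precKey, h, abs_of_nonneg h]

lemma posOf_eq_self_of_strictAnti (hpos : ∀ i, 0 ≤ lam i) (hanti : StrictAnti lam) (i : Fin n) :
    posOf lam i = i := by
  refine (posOf_eq_card lam i).trans (card_filter_apply_lt_of_strictMono (fun j k hjk => ?_) i)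
  rw [precKey_of_nonneg (hpos j), precKey_of_nonneg (hpos k), Prod.Lex.toLex_lt_toLex]
  exact Or.inl (neg_lt_neg (hanti hjk))

lemma lt_of_posOf_lt_of_lt (hpos : ∀ i, 0 ≤ lam i) {i j : Fin n} (hij : i < j)
    (h : posOf lam j < posOf lam i) : lam i < lam j := by
  rw [posOf_lt_posOf_iff, prec_iff_precKey_lt, precKey_of_nonneg (hpos i),
    precKey_of_nonneg (hpos j), Prod.Lex.toLex_lt_toLex] at h
  rw [Fin.lt_def] at hij
  omega

end Nonneg

theorem stmt11_general (n : ℕ) (r : ℤ) (hr : 1 ≤ r - 1)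
    (lam : Fin n → ℤ)
    (hpos : ∀ i, 0 ≤ lam i)
    (hgap : ∀ i j : Fin n, (j : ℕ) = (i : ℕ) + 1 → 2 * (r - 1) ≤ lam i - lam j)
    (mu : Fin n → ℤ)
    (hsg : ∀ i, sgn mu i = sgn lam i)
    (m : Fin n → ℤ)
    (heq : ∀ i, mu i = lam i + (r - 1) * m i)
    (hrho : ∀ i, rho mu i = rho lam i + m i) :
    mu = lam := by
  have hmu : ∀ i, 0 ≤ mu i := fun i =>
    sgn_eq_one_iff.1 ((hsg i).trans (sgn_eq_one_iff.2 (hpos i)))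
  have hspread : ∀ i j : Fin n, i ≤ j → 2 * (r - 1) * (j - i) ≤ lam i - lam j :=
    fun i j => Fin.mul_sub_le_sub_of_forall_le_sub_succ hgap
  have hanti : StrictAnti lam := fun i j hij => by
    have : ((i : ℕ) : ℤ) < j := by exact_mod_cast hij
    nlinarith [hspread i j hij.le]
  have hm : ∀ i, m i = i - posOf mu i := fun i => by
    have := hrho i
    rw [rho_of_nonneg (hmu i), rho_of_nonneg (hpos i),
      posOf_eq_self_of_strictAnti hpos hanti] at this
    linarith
  have hperm : posPerm mu = 1 := by
    refine (posPerm mu).eq_one_of_forall_add_lt_of_inversion fun i j hij hji => ?_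
    have hmuij := lt_of_posOf_lt_of_lt hmu hij hji
    simp only [val_posPerm] at hji ⊢
    have : 0 < (r - 1) * ((posOf mu i - posOf mu j : ℤ) - (j - i)) := by
      nlinarith [heq i, heq j, hm i, hm j, hspread i j hij.le]
    have := pos_of_mul_pos_right this (by omega)
    omega
  funext i
  have hi : posOf mu i = i := by simpa using congrArg Fin.val (Equiv.Perm.ext_iff.1 hperm i)
  rw [heq i, hm i, hi, sub_self, mul_zero, add_zero]

/-- a dominant λ with gaps λ_i − λ_{i+1} ≥ 2(r−1) has a non-degenerate
eigenvalue under t·q^{r−1} = 1: if σ(μ) = σ(λ), μ = λ + (r−1)m and ρ(μ) = ρ(λ) + m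
componentwise for an integer vector m, then μ = λ. -/
theorem stmt11 (n : ℕ) (hn : 2 ≤ n) (r : ℤ) (hr : 1 ≤ r - 1)
    (lam : Fin n → ℤ)
    (hdom : ∀ i j : Fin n, i ≤ j → lam j ≤ lam i)
    (hpos : ∀ i, 0 ≤ lam i)
    (hgap : ∀ i j : Fin n, (j : ℕ) = (i : ℕ) + 1 → 2 * (r - 1) ≤ lam i - lam j)
    (mu : Fin n → ℤ)
    (hsg : ∀ i, sgn mu i = sgn lam i)
    (m : Fin n → ℤ)
    (heq : ∀ i, mu i = lam i + (r - 1) * m i)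
    (hrho : ∀ i, rho mu i = rho lam i + m i) :
    mu = lam :=
  stmt11_general n r hr lam hpos hgap mu hsg m heq hrho

end CCnDAHA
end

section
/- Fix integers n ≥ 2, r−1 ≥ 1, and k with 2n−2 ≥ k+1 ≥ 0. Let λ ∈ ℤ^n satisfy λ_i ≥ r−1 for all 1 ≤ i ≤ n. Suppose μ ∈ ℤ^n and integers m_1, …, m_n satisfy μ_i = λ_i + (r−1)m_i, ρ(μ)_i = ρ(λ)_i + (k+1)m_i, and σ(μ)_i = σ(λ)_i + 2m_i for all 1 ≤ i ≤ n. Then μ = λ. -/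
open scoped Classical

namespace CCnDAHA

variable {n : ℕ}




/-!
Since `λ_i ≥ 0`, `σ(λ)_i = 1`, and as `σ(μ)_i = ±1` the sign condition forces `m_i ∈ {0, -1}`.
If `m_i = -1`, then `μ_i = λ_i - (r - 1) ≥ 0`, so `σ(μ)_i = 1`, contradicting `σ(μ)_i = -1`.
Hence `m_i = 0` and `μ_i = λ_i`.
-/

theorem sgn_of_nonneg {lam : Fin n → ℤ} {i : Fin n} (h : 0 ≤ lam i) : sgn lam i = 1 :=
  if_pos h

theorem sgn_of_neg {lam : Fin n → ℤ} {i : Fin n} (h : lam i < 0) : sgn lam i = -1 :=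
  if_neg h.not_ge

theorem eq_of_sgn_eq_add_two_mul {lam mu : Fin n → ℤ} {i : Fin n} {b c : ℤ}
    (hb : 0 ≤ b) (hlam : b ≤ lam i) (heq : mu i = lam i + b * c)
    (hsg : sgn mu i = sgn lam i + 2 * c) : mu i = lam i := by
  rw [sgn_of_nonneg (hb.trans hlam)] at hsg
  rcases le_or_gt 0 (mu i) with hmu | hmu
  · have hc : c = 0 := by rw [sgn_of_nonneg hmu] at hsg; linarith
    simpa [hc] using heq
  · have hc : c = -1 := by rw [sgn_of_neg hmu] at hsg; linarith
    rw [hc] at heq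
    linarith

theorem stmt12_general (n : ℕ) (r : ℤ) (hr : 1 ≤ r - 1)
    (lam : Fin n → ℤ) (hlarge : ∀ i, r - 1 ≤ lam i)
    (mu : Fin n → ℤ) (m : Fin n → ℤ)
    (heq : ∀ i, mu i = lam i + (r - 1) * m i)
    (hsg : ∀ i, sgn mu i = sgn lam i + 2 * m i) :
    mu = lam :=
  funext fun i => eq_of_sgn_eq_add_two_mul (by linarith) (hlarge i) (heq i) (hsg i)

/-- λ with λ_i ≥ r−1 has a non-degenerate eigenvalue under
t^{k+1}q^{r−1}(a*)² = 1: if μ = λ + (r−1)m, ρ(μ) = ρ(λ) + (k+1)m and σ(μ) = σ(λ) + 2m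
componentwise for an integer vector m, then μ = λ. -/
theorem stmt12 (n : ℕ) (hn : 2 ≤ n) (r k : ℤ) (hr : 1 ≤ r - 1)
    (hk0 : 0 ≤ k + 1) (hk2n : k + 1 ≤ 2 * (n : ℤ) - 2)
    (lam : Fin n → ℤ) (hlarge : ∀ i, r - 1 ≤ lam i)
    (mu : Fin n → ℤ) (m : Fin n → ℤ)
    (heq : ∀ i, mu i = lam i + (r - 1) * m i)
    (hrho : ∀ i, rho mu i = rho lam i + (k + 1) * m i)
    (hsg : ∀ i, sgn mu i = sgn lam i + 2 * m i) :
    mu = lam :=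
  stmt12_general n r hr lam hlarge mu m heq hsg

end CCnDAHA
end

section
/- Let n ≥ 2. For every λ ∈ ℤ^n there exist an integer ℓ ≥ 0 and indices j_1, …, j_ℓ ∈ {0, 1, …, n} such that, setting λ^{(0)} = (0, …, 0) and λ^{(m)} = s_{j_m}·λ^{(m−1)} for 1 ≤ m ≤ ℓ, one has λ^{(ℓ)} = λ and ⟨λ^{(m)}, α_{j_m}⟩ > 0 for every 1 ≤ m ≤ ℓ. -/
/-!
Read the chain backwards: it suffices to walk from `λ` down to `0`, applying at each step some
`s_j` to the current weight `μ` with `⟨μ, α_j⟩ > 0` (each `s_j` is an involution). Such a `j`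
exists whenever `μ ≠ 0`: either `μ` has a descent `μ_k > μ_{k+1}`, or it is weakly increasing and
nonzero, so that `μ_n > 0` or `μ_1 < 0`. The walk terminates because `s_0` and `s_n` strictly
decrease `∑ |4 μ_i + 1|` (they reflect one coordinate across `-1/2` or `0`, towards `-1/4`),
while a descent-removing `s_k`, `0 < k < n`, preserves this sum and removes an inversion.
-/

open scoped Classical

namespace CCnDAHA

variable {n : ℕ}

open Finset

theorem dotAct_involutive (i : ℕ) : Function.Involutive (dotAct (n := n) i) := by
  intro lam
  funext j
  simp only [dotAct]
  split_ifs <;> first | rfl | omega | simp | (congr 1; apply Fin.ext; simp only at *; omega)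

inductive DotReachable : (Fin n → ℤ) → Prop
  | zero : DotReachable fun _ => 0
  | step {lam : Fin n → ℤ} {j : ℕ} : DotReachable lam → j ≤ n →
      0 < pairing j (dotAct j lam) → DotReachable (dotAct j lam)

theorem DotReachable.of_dotAct {lam : Fin n → ℤ} {j : ℕ} (hj : j ≤ n) (hp : 0 < pairing j lam)
    (h : DotReachable (dotAct j lam)) : DotReachable lam := by
  simpa only [dotAct_involutive j lam] using h.step hj (by rwa [dotAct_involutive j lam])

theorem DotReachable.exists_chain {lam : Fin n → ℤ} (h : DotReachable lam) :
    ∃ (L : ℕ) (js : ℕ → ℕ) (seq : ℕ → (Fin n → ℤ)),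
      (∀ ℓ, ℓ < L → js ℓ ≤ n) ∧
      seq 0 = (fun _ => 0) ∧
      (∀ ℓ, ℓ < L → seq (ℓ + 1) = dotAct (js ℓ) (seq ℓ)) ∧
      seq L = lam ∧
      (∀ ℓ, ℓ < L → 0 < pairing (js ℓ) (seq (ℓ + 1))) := by
  induction h with
  | zero => exact ⟨0, fun _ => 0, fun _ _ => 0, by simp, rfl, by simp, rfl, by simp⟩
  | @step lam j _ hj hp ih =>
    obtain ⟨L, js, seq, hjs, h0, hstep, hL, hpos⟩ := ih
    refine ⟨L + 1, Function.update js L j, Function.update seq (L + 1) (dotAct j lam),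
      ?_, by simpa using h0, ?_, by simp, ?_⟩ <;> intro ℓ hℓ <;>
      obtain hℓ | rfl := Nat.lt_succ_iff_lt_or_eq.1 hℓ
    · simpa [hℓ.ne] using hjs ℓ hℓ
    · simpa
    · simpa [hℓ.ne, show ℓ ≠ L + 1 by omega] using hstep ℓ hℓ
    · simp [hL]
    · simpa [hℓ.ne] using hpos ℓ hℓ
    · simpa

def potential (lam : Fin n → ℤ) : ℕ := ∑ i, (4 * lam i + 1).natAbs

def inversions (lam : Fin n → ℤ) : ℕ := #{p : Fin n × Fin n | p.1 < p.2 ∧ lam p.2 < lam p.1}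

theorem potential_comp_perm (lam : Fin n → ℤ) (e : Equiv.Perm (Fin n)) :
    potential (lam ∘ e) = potential lam :=
  Equiv.sum_comp e fun i => (4 * lam i + 1).natAbs

theorem potential_update_lt {lam : Fin n → ℤ} {i : Fin n} {x : ℤ}
    (h : (4 * x + 1).natAbs < (4 * lam i + 1).natAbs) :
    potential (Function.update lam i x) < potential lam := by
  refine sum_lt_sum (fun j _ => ?_) ⟨i, mem_univ i, by simpa using h⟩
  rcases eq_or_ne j i with rfl | hj
  · simpa using h.le
  · simp [hj]

section
variable {m : ℕ}

theorem dotAct_zero_eq_update (lam : Fin (m + 1) → ℤ) :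
    dotAct 0 lam = Function.update lam 0 (-1 - lam 0) := by
  funext j
  rcases eq_or_ne j 0 with rfl | hj
  · simp [dotAct]
  · simp [dotAct, hj]

theorem dotAct_last_eq_update (lam : Fin (m + 1) → ℤ) :
    dotAct (m + 1) lam = Function.update lam (Fin.last m) (-lam (Fin.last m)) := by
  funext j
  rcases eq_or_ne j (Fin.last m) with rfl | hj
  · simp [dotAct]
  · have : (j : ℕ) ≠ m := fun h => hj (Fin.ext h)
    simp [dotAct, hj, this]

theorem dotAct_succ_eq_comp_swap (k : Fin m) (lam : Fin (m + 1) → ℤ) :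
    dotAct (k + 1) lam = lam ∘ Equiv.swap k.castSucc k.succ := by
  funext j
  have hk : (k : ℕ) + 1 ≠ m + 1 := by omega
  simp only [dotAct, Nat.add_one_ne_zero, hk, if_false, Function.comp_apply, Equiv.swap_apply_def,
    Fin.ext_iff, Fin.val_castSucc, Fin.val_succ]
  split_ifs <;>
    first | rfl | (exfalso; omega) | (congr 1; ext; simp only [Fin.val_castSucc, Fin.val_succ]; omega)

theorem pairing_zero (lam : Fin (m + 1) → ℤ) : pairing 0 lam = -2 * lam 0 := by
  simp [pairing]

theorem pairing_last (lam : Fin (m + 1) → ℤ) : pairing (m + 1) lam = 2 * lam (Fin.last m) := by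
  simp [pairing]
  rfl

theorem pairing_succ (k : Fin m) (lam : Fin (m + 1) → ℤ) :
    pairing (k + 1) lam = lam k.castSucc - lam k.succ := by
  simp [pairing, k.isLt.ne, Nat.mod_eq_of_lt (k.isLt.trans (Nat.lt_succ_self _)),
    Nat.mod_eq_of_lt (Nat.succ_lt_succ k.isLt)]
  rfl

theorem swap_castSucc_succ_lt_swap_of_lt {k : Fin m} {a b : Fin (m + 1)} (hab : a < b)
    (hk : ¬(a = k.castSucc ∧ b = k.succ)) :
    Equiv.swap k.castSucc k.succ a < Equiv.swap k.castSucc k.succ b := by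
  simp only [Equiv.swap_apply_def, Fin.ext_iff, Fin.lt_def, apply_ite Fin.val, Fin.val_castSucc,
    Fin.val_succ] at *
  split_ifs <;> omega

theorem inversions_comp_swap_lt {lam : Fin (m + 1) → ℤ} {k : Fin m}
    (h : lam k.succ < lam k.castSucc) :
    inversions (lam ∘ Equiv.swap k.castSucc k.succ) < inversions lam := by
  set s := Equiv.swap k.castSucc k.succ
  have hmem : (k.castSucc, k.succ) ∈
      ({p : Fin (m + 1) × Fin (m + 1) | p.1 < p.2 ∧ lam p.2 < lam p.1} : Finset _) := by
    simpa [Fin.castSucc_lt_succ] using h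
  refine lt_of_le_of_lt (card_le_card_of_injOn (Equiv.prodCongr s s) ?_ ?_)
    (card_erase_lt_of_mem hmem)
  · rintro ⟨a, b⟩ hp
    simp only [coe_filter, mem_univ, true_and, Set.mem_ofPred_eq, Function.comp_apply] at hp
    have hk : ¬(a = k.castSucc ∧ b = k.succ) := by
      rintro ⟨rfl, rfl⟩
      have := hp.2
      simp only [s, Equiv.swap_apply_left, Equiv.swap_apply_right] at this
      exact this.not_gt h
    simp only [coe_erase, coe_filter, Equiv.prodCongr_apply, Prod.map, Set.mem_sdiff,
      Set.mem_ofPred_eq, mem_univ, true_and, Set.mem_singleton_iff, Prod.ext_iff]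
    refine ⟨⟨swap_castSucc_succ_lt_swap_of_lt hp.1 hk, by simpa [s] using hp.2⟩, ?_⟩
    rintro ⟨ha, hb⟩
    rw [Equiv.swap_apply_eq_iff, Equiv.swap_apply_left] at ha
    rw [Equiv.swap_apply_eq_iff, Equiv.swap_apply_right] at hb
    exact Fin.castSucc_lt_succ.not_gt (ha ▸ hb ▸ hp.1)
  · exact (Equiv.prodCongr s s).injective.injOn

theorem exists_dotAct_descent {lam : Fin (m + 1) → ℤ} (h : lam ≠ 0) :
    ∃ j ≤ m + 1, 0 < pairing j lam ∧
      (potential (dotAct j lam) < potential lam ∨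
        potential (dotAct j lam) = potential lam ∧ inversions (dotAct j lam) < inversions lam) := by
  by_cases hdesc : ∃ k : Fin m, lam k.succ < lam k.castSucc
  · obtain ⟨k, hk⟩ := hdesc
    refine ⟨k + 1, by omega, by rw [pairing_succ]; omega, Or.inr ?_⟩
    rw [dotAct_succ_eq_comp_swap]
    exact ⟨potential_comp_perm _ _, inversions_comp_swap_lt hk⟩
  have hmono : Monotone lam := Fin.monotone_iff_le_succ.2 fun k => not_lt.1 fun hk => hdesc ⟨k, hk⟩
  by_cases hlast : 0 < lam (Fin.last m)
  · refine ⟨m + 1, le_rfl, by rw [pairing_last]; omega, Or.inl ?_⟩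
    rw [dotAct_last_eq_update]
    exact potential_update_lt (by omega)
  obtain ⟨i, hi⟩ := Function.ne_iff.1 h
  have hfirst : lam 0 < 0 := by
    have := hmono (Fin.zero_le i)
    have := hmono (Fin.le_last i)
    simp only [Pi.zero_apply] at hi
    omega
  refine ⟨0, Nat.zero_le _, by rw [pairing_zero]; omega, Or.inl ?_⟩
  rw [dotAct_zero_eq_update]
  exact potential_update_lt (by omega)

theorem dotReachable_fin_succ (lam : Fin (m + 1) → ℤ) : DotReachable lam := by
  by_cases h : lam = 0
  · exact h ▸ .zero
  obtain ⟨j, hj, hp, hdec⟩ := exists_dotAct_descent h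
  exact .of_dotAct hj hp (dotReachable_fin_succ (dotAct j lam))
termination_by (potential lam, inversions lam)
decreasing_by exact Prod.lex_def.2 hdec

end

theorem dotReachable : ∀ {n : ℕ} (lam : Fin n → ℤ), DotReachable lam
  | 0, lam => Subsingleton.elim (fun _ => 0) lam ▸ .zero
  | _ + 1, lam => dotReachable_fin_succ lam

theorem stmt17_general (n : ℕ) (lam : Fin n → ℤ) :
    ∃ (L : ℕ) (js : ℕ → ℕ) (seq : ℕ → (Fin n → ℤ)),
      (∀ ℓ, ℓ < L → js ℓ ≤ n) ∧
      seq 0 = (fun _ => 0) ∧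
      (∀ ℓ, ℓ < L → seq (ℓ + 1) = dotAct (js ℓ) (seq ℓ)) ∧
      seq L = lam ∧
      (∀ ℓ, ℓ < L → 0 < pairing (js ℓ) (seq (ℓ + 1))) :=
  (dotReachable lam).exists_chain

/-- every λ ∈ ℤ^n is reached from (0,…,0) by a chain of dot-simple
reflections with ⟨λ^{(m)}, α_{j_m}⟩ > 0 at each step. -/
theorem stmt17 (n : ℕ) (hn : 2 ≤ n) (lam : Fin n → ℤ) :
    ∃ (L : ℕ) (js : ℕ → ℕ) (seq : ℕ → (Fin n → ℤ)),
      (∀ ℓ, ℓ < L → js ℓ ≤ n) ∧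
      seq 0 = (fun _ => 0) ∧
      (∀ ℓ, ℓ < L → seq (ℓ + 1) = dotAct (js ℓ) (seq ℓ)) ∧
      seq L = lam ∧
      (∀ ℓ, ℓ < L → 0 < pairing (js ℓ) (seq (ℓ + 1))) :=
  stmt17_general n lam

end CCnDAHA
end

section
/- Fix integers n ≥ 2, 1 ≤ i₀ ≤ n, r−1 ≥ 1, and a sign ε ∈ {+1, −1}. Let s be an irreducible factor in A of T^{2(n−i₀)}·Q^{2(r−1)}·T_n + 1 if ε = +1, and of T^{2(n−i₀)}·Q^{2(r−1)}·T_0 + 1 if ε = −1, and form K_s. Set q̄ = (Q²)‾, t̄ = (T²)‾, ā* = (T_n T_0)‾ ∈ K_s^×. Then the map ℤ^n → (K_s^×)^n sending λ to (q̄^{λ_1} t̄^{ρ(λ)_1} (ā*)^{σ(λ)_1}, …, q̄^{λ_n} t̄^{ρ(λ)_n} (ā*)^{σ(λ)_n}) is injective. -/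
/-
Write `w` for the exponent of `T^(2(n-i₀)) Q^(2(r-1)) X_c`, where `X_c` is `T_n` or `T_0`. The
binomial `X^w + 1` is prime in `A`: the substitution `X^w ↦ -1`, i.e.
`X^u ↦ (-1)^(u_c) X^(u - u_c w)`, is an endomorphism of `A` that is the identity modulo `X^w + 1`,
so its kernel is `(X^w + 1)`, and `A` is a domain. Hence the irreducible factor `s` is associate
to `X^w + 1`, and a monomial `X^v` becomes `1` in `K_s` only if `v = v_c w`. If the eigenvalues of
`λ` and `μ` agree at `i`, this applies to the difference `v` of their exponents. Its coordinates at
`T_n` and `T_0` both equal `σ(λ)_i - σ(μ)_i`, while `w` vanishes at the one of them that is not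
`X_c`; so the sign difference is `0`, `v = 0`, and its `Q`-coordinate `2(λ_i - μ_i)` vanishes.
-/

open scoped Classical

namespace CCnDAHA

variable {n : ℕ}




/-- Laurent polynomial ring in N variables over K. -/
abbrev LaurentMv (K : Type*) [CommRing K] (N : ℕ) : Type _ := AddMonoidAlgebra K (Fin N →₀ ℤ)

/-- evaluation of a Laurent polynomial at a point z. -/
noncomputable def evalAt {K : Type*} [Field K] (z : Fin n → K) (f : LaurentMv K n) : K :=
  Finsupp.sum f.coeff (fun v c => c * ∏ i, z i ^ (v i))

/-- cyclic successor in Fin k1. -/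
def finSucc {k1 : ℕ} (m : Fin k1) : Fin k1 :=
  ⟨((m : ℕ) + 1) % k1, Nat.mod_lt _ (by have := m.isLt; omega)⟩

/-- A wheel of type (k1, r1) in z, with parameters t, q. -/
def IsWheel {K : Type*} [Field K] (k1 r1 : ℕ) (t q : K) (z : Fin n → Kˣ)
    (idx : Fin k1 → Fin n) (sg : Fin k1 → ℤ) (p : Fin k1 → ℕ) : Prop :=
  Function.Injective idx ∧
  (∀ m, sg m = 1 ∨ sg m = -1) ∧
  (∑ m, p m) = r1 ∧
  (∀ m : Fin k1, ((z (idx m) : K) ^ (sg m)) * t * q ^ (p m)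
      = (z (idx (finSucc m)) : K) ^ (sg (finSucc m))) ∧
  (∀ m : Fin k1, p m = 0 →
    (sg m = 1 ∧ sg (finSucc m) = 1 ∧ idx m < idx (finSucc m)) ∨
    (sg m = 1 ∧ sg (finSucc m) = -1) ∨
    (sg m = -1 ∧ sg (finSucc m) = -1 ∧ idx (finSucc m) < idx m))

/-- z admits mw wheels of type (k1,r1) with pairwise disjoint index sets. -/
def HasWheels {K : Type*} [Field K] (k1 r1 : ℕ) (t q : K) (mw : ℕ) (z : Fin n → Kˣ) : Prop :=
  ∃ (idx : Fin mw → Fin k1 → Fin n) (sg : Fin mw → Fin k1 → ℤ) (p : Fin mw → Fin k1 → ℕ),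
    (∀ a, IsWheel k1 r1 t q z (idx a) (sg a) (p a)) ∧
    (∀ a b, a ≠ b → ∀ m m', idx a m ≠ idx b m')

/-- the mw-wheel condition of type (k1, r1). -/
def SatisfiesWheel {K : Type*} [Field K] (k1 r1 : ℕ) (t q : K) (mw : ℕ)
    (f : LaurentMv K n) : Prop :=
  ∀ z : Fin n → Kˣ, HasWheels k1 r1 t q mw z → evalAt (fun i => (z i : K)) f = 0

/-- The six-variable Laurent polynomial ring A (variables Q,T,T_n,T_0,U_n,U_0 = 0,…,5). -/
abbrev A6 : Type := AddMonoidAlgebra ℂ (Fin 6 →₀ ℤ)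

/-- image of x ∈ A in the fraction field K_s of A/(s). -/
noncomputable def bar (s : A6) (x : A6) : FractionRing (A6 ⧸ Ideal.span {s}) :=
  algebraMap (A6 ⧸ Ideal.span {s}) (FractionRing (A6 ⧸ Ideal.span {s}))
    (Ideal.Quotient.mk (Ideal.span {s}) x)

/-- the permutation action s_i f (1 ≤ i ≤ n−1), swapping the variables x_i, x_j. -/
noncomputable def sSwap {K : Type*} [CommRing K] (i j : Fin n) (f : LaurentMv K n) :
    LaurentMv K n :=
  Finsupp.sum f.coeff (fun v c =>
    AddMonoidAlgebra.single (Finsupp.equivMapDomain (Equiv.swap i j) v) c)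

/-- the action s_n f : x_i ↦ x_i⁻¹. -/
noncomputable def sNeg {K : Type*} [CommRing K] (i : Fin n) (f : LaurentMv K n) :
    LaurentMv K n :=
  Finsupp.sum f.coeff (fun v c => AddMonoidAlgebra.single (Finsupp.update v i (-(v i))) c)

/-- the action s_0 f : x_i ↦ q·x_i⁻¹. -/
noncomputable def sNegQ {K : Type*} [Field K] (q : K) (i : Fin n) (f : LaurentMv K n) :
    LaurentMv K n :=
  Finsupp.sum f.coeff (fun v c =>
    AddMonoidAlgebra.single (Finsupp.update v i (-(v i))) (c * q ^ (v i)))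

/-- defining relation of the Noumi operator T̂_i (1 ≤ i ≤ n−1), for the adjacent pair (i,j):
(1 − x_i x_j^{−1})(g − t^{1/2} f) = t^{−1/2}(1 − t x_i x_j^{−1})(s_i f − f). -/
def RelMid {K : Type*} [Field K] (th : K) (i j : Fin n) (f g : LaurentMv K n) : Prop :=
  (AddMonoidAlgebra.single 0 1
      - AddMonoidAlgebra.single (Finsupp.single i 1 + Finsupp.single j (-1)) (1 : K))
      * (g - th • f)
    = th⁻¹ • ((AddMonoidAlgebra.single 0 1
      - AddMonoidAlgebra.single (Finsupp.single i 1 + Finsupp.single j (-1)) (th ^ 2))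
      * (sSwap i j f - f))

/-- defining relation of T̂_n (i is the last variable):
(1 − x_i²)(g − t_n^{1/2} f) = t_n^{−1/2}(1 − a x_i)(1 − b x_i)(s_n f − f). -/
def RelLast {K : Type*} [Field K] (tnh a b : K) (i : Fin n) (f g : LaurentMv K n) : Prop :=
  (AddMonoidAlgebra.single 0 1 - AddMonoidAlgebra.single (Finsupp.single i 2) (1 : K))
      * (g - tnh • f)
    = tnh⁻¹ • (((AddMonoidAlgebra.single 0 1 - AddMonoidAlgebra.single (Finsupp.single i 1) a)
        * (AddMonoidAlgebra.single 0 1 - AddMonoidAlgebra.single (Finsupp.single i 1) b))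
      * (sNeg i f - f))

/-- defining relation of T̂_0 (i is the first variable):
(1 − q x_i^{−2})(g − t_0^{1/2} f) = t_0^{−1/2}(1 − c x_i^{−1})(1 − d x_i^{−1})(s_0 f − f). -/
def RelZero {K : Type*} [Field K] (t0h q c d : K) (i : Fin n) (f g : LaurentMv K n) : Prop :=
  (AddMonoidAlgebra.single 0 1 - AddMonoidAlgebra.single (Finsupp.single i (-2)) q)
      * (g - t0h • f)
    = t0h⁻¹ • (((AddMonoidAlgebra.single 0 1 - AddMonoidAlgebra.single (Finsupp.single i (-1)) c)
        * (AddMonoidAlgebra.single 0 1 - AddMonoidAlgebra.single (Finsupp.single i (-1)) d))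
      * (sNegQ q i f - f))

end CCnDAHA

namespace AddMonoidAlgebra

variable {R G : Type*} [CommRing R] [AddCommGroup G] (φ : G →+ ℤ) (w : G)

/-- For `φ w = 1` this is the substitution `X^w ↦ -1`; its kernel is the ideal `(X^w + 1)`. -/
noncomputable def substNegOne : AddMonoidAlgebra R G →ₐ[R] AddMonoidAlgebra R G :=
  lift R (AddMonoidAlgebra R G) G
    { toFun := fun u => single (u.toAdd - φ u.toAdd • w) ((φ u.toAdd).negOnePow : R)
      map_one' := by simp [one_def]
      map_mul' := fun u v => by
        simp only [toAdd_mul, map_add, single_mul_single, Int.negOnePow_add, add_smul,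
          Units.val_mul, Int.cast_mul]
        congr 1
        abel }

theorem substNegOne_single (u : G) (r : R) :
    substNegOne φ w (single u r) = single (u - φ u • w) (r * (φ u).negOnePow) := by
  rw [substNegOne, lift_single]
  exact smul_single' _ _ _

variable {φ w}

theorem substNegOne_single_add_one (hw : φ w = 1) :
    substNegOne φ w (single w 1 + 1 : AddMonoidAlgebra R G) = 0 := by
  simp [substNegOne_single, hw, one_def]

local notation "π" => Ideal.Quotient.mk (Ideal.span {(single w 1 + 1 : AddMonoidAlgebra R G)})

theorem mk_single_self : π (single w 1) = -1 := by
  refine eq_neg_of_add_eq_zero_left ?_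
  rw [← map_one π, ← map_add, Ideal.Quotient.eq_zero_iff_mem]
  exact Ideal.mem_span_singleton_self _

theorem mk_single_zsmul (k : ℤ) : π (single (k • w) 1) = ((k.negOnePow : ℤ) : _) := by
  have hstep (k : ℤ) : π (single ((k + 1) • w) 1) = - π (single (k • w) 1) := by
    rw [add_smul, one_smul, ← mul_one (1 : R), ← single_mul_single, mul_one, map_mul,
      mk_single_self]
    ring
  induction k using Int.induction_on with
  | zero => simp [← one_def]
  | succ i ih =>
    rw [hstep, ih, Int.negOnePow_succ]
    push_cast
    ring
  | pred i ih =>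
    rw [← neg_neg (π _), ← hstep, sub_add_cancel, ih, Int.negOnePow_sub, Int.negOnePow_one]
    push_cast
    ring

theorem mk_substNegOne (f : AddMonoidAlgebra R G) : π (substNegOne φ w f) = π f := by
  suffices h : (Ideal.Quotient.mkₐ R _).comp (substNegOne φ w) = Ideal.Quotient.mkₐ R _ from
    DFunLike.congr_fun h f
  refine algHom_ext (fun u => ?_) (Subsingleton.elim _ _)
  have hsplit : single u (1 : R) = single (u - φ u • w) 1 * single (φ u • w) 1 := by
    rw [single_mul_single, sub_add_cancel, mul_one]
  have hsubst : substNegOne φ w (single u (1 : R))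
      = single (u - φ u • w) 1 * (((φ u).negOnePow : ℤ) : AddMonoidAlgebra R G) := by
    rw [substNegOne_single, intCast_def, single_mul_single, add_zero]
  simp only [AlgHom.comp_apply, Ideal.Quotient.mkₐ_eq_mk]
  rw [hsubst, hsplit, map_mul, map_mul, map_intCast, mk_single_zsmul]

theorem single_add_one_dvd_iff (hw : φ w = 1) {f : AddMonoidAlgebra R G} :
    single w 1 + 1 ∣ f ↔ substNegOne φ w f = 0 := by
  constructor
  · rintro ⟨g, rfl⟩
    rw [map_mul, substNegOne_single_add_one hw, zero_mul]
  · intro h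
    rw [← Ideal.mem_span_singleton, ← Ideal.Quotient.eq_zero_iff_mem, ← mk_substNegOne, h,
      map_zero]

theorem prime_single_add_one [Nontrivial R] [NoZeroDivisors (AddMonoidAlgebra R G)]
    (hw : φ w = 1) : Prime (single w 1 + 1 : AddMonoidAlgebra R G) := by
  refine ⟨fun h => ?_, fun h => ?_, fun a b hab => ?_⟩
  · have hw0 : w ≠ 0 := by rintro rfl; simp at hw
    simpa [one_def, hw0] using congrArg (fun f : AddMonoidAlgebra R G => f.coeff w) h
  · simpa using (single_add_one_dvd_iff hw).1 (h.dvd : _ ∣ (1 : AddMonoidAlgebra R G))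
  · rw [single_add_one_dvd_iff hw, map_mul, mul_eq_zero] at hab
    simpa only [single_add_one_dvd_iff hw] using hab

theorem eq_zsmul_of_single_add_one_dvd [Nontrivial R] (hw : φ w = 1) {v : G}
    (h : single w 1 + 1 ∣ (single v 1 - 1 : AddMonoidAlgebra R G)) : v = φ v • w := by
  rw [single_add_one_dvd_iff hw, map_sub, map_one, substNegOne_single, one_mul, sub_eq_zero,
    one_def, single_inj] at h
  rcases h with ⟨h, -⟩ | ⟨-, h⟩
  · exact sub_eq_zero.1 h
  · exact absurd h one_ne_zero

end AddMonoidAlgebra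

namespace CCnDAHA

open AddMonoidAlgebra

section Bar

variable (s : A6)

theorem bar_mul (x y : A6) : bar s x * bar s y = bar s (x * y) := by
  simp only [bar, map_mul]

theorem bar_single_zpow [IsDomain (A6 ⧸ Ideal.span {s})] (u : Fin 6 →₀ ℤ) (k : ℤ) :
    bar s (single u 1) ^ k = bar s (single (k • u) 1) := by
  let χ : Multiplicative (Fin 6 →₀ ℤ) →* FractionRing (A6 ⧸ Ideal.span {s}) :=
    ((algebraMap (A6 ⧸ Ideal.span {s}) _).comp (Ideal.Quotient.mk _)).toMonoidHom.comp
      (of ℂ (Fin 6 →₀ ℤ))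
  have hχ (u : Fin 6 →₀ ℤ) : χ (Multiplicative.ofAdd u) = bar s (single u 1) := rfl
  rw [← hχ, ← hχ, ofAdd_zsmul, ← MonoidHom.coe_toHomUnits χ, ← MonoidHom.coe_toHomUnits χ,
    map_zpow, Units.val_zpow_eq_zpow_val]

theorem dvd_single_sub_one_of_bar_eq {u v : Fin 6 →₀ ℤ}
    (h : bar s (single u 1) = bar s (single v 1)) : s ∣ single (u - v) 1 - 1 := by
  have hone : bar s (single (u - v) 1) = bar s 1 := by
    rw [sub_eq_add_neg, ← mul_one (1 : ℂ), ← single_mul_single, ← bar_mul, h, bar_mul,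
      single_mul_single, add_neg_cancel, mul_one, one_def]
  rw [← Ideal.mem_span_singleton, ← Ideal.Quotient.eq_zero_iff_mem, map_sub, sub_eq_zero]
  exact IsFractionRing.injective _ _ hone

end Bar

/-- The exponent of `Q^(2a) T^(2b) (T_n T_0)^e = q^a t^b (a*)^e`. -/
noncomputable def yExponent (a b e : ℤ) : Fin 6 →₀ ℤ :=
  a • Finsupp.single 0 2 + b • Finsupp.single 1 2 + e • (Finsupp.single 2 1 + Finsupp.single 3 1)

theorem yExponent_sub (a b e a' b' e' : ℤ) :
    yExponent a b e - yExponent a' b' e' = yExponent (a - a') (b - b') (e - e') := by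
  simp only [yExponent, sub_smul]
  abel

theorem bar_zpow_mul_zpow_mul_zpow (s : A6) [IsDomain (A6 ⧸ Ideal.span {s})] (a b e : ℤ) :
    bar s (single (Finsupp.single 0 2) 1) ^ a * bar s (single (Finsupp.single 1 2) 1) ^ b
      * bar s (single (Finsupp.single 2 1 + Finsupp.single 3 1) 1) ^ e
      = bar s (single (yExponent a b e) 1) := by
  simp only [bar_single_zpow, bar_mul, single_mul_single, mul_one, yExponent]

/-- The exponent of `T^A Q^B X_c`; for `c = 2, 3` the variable `X_c` is `T_n`, resp. `T_0`. -/
noncomputable def specExponent (A B : ℤ) (c : Fin 6) : Fin 6 →₀ ℤ :=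
  Finsupp.single 1 A + Finsupp.single 0 B + Finsupp.single c 1

theorem specExponent_self (A B : ℤ) {c : Fin 6} (hc : c = 2 ∨ c = 3) :
    specExponent A B c c = 1 := by
  rcases hc with rfl | rfl <;> simp [specExponent]

theorem prime_single_specExponent_add_one (A B : ℤ) {c : Fin 6} (hc : c = 2 ∨ c = 3) :
    Prime (single (specExponent A B c) 1 + 1 : A6) :=
  prime_single_add_one (φ := Finsupp.applyAddHom c) (specExponent_self A B hc)

theorem eq_zero_of_single_specExponent_add_one_dvd (A B : ℤ) {c : Fin 6} (hc : c = 2 ∨ c = 3)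
    {a b e : ℤ} (h : (single (specExponent A B c) 1 + 1 : A6) ∣ single (yExponent a b e) 1 - 1) :
    a = 0 := by
  have hmul := eq_zsmul_of_single_add_one_dvd (φ := Finsupp.applyAddHom c)
    (specExponent_self A B hc) h
  have := congrArg (fun f : Fin 6 →₀ ℤ => (f 0, f 2, f 3)) hmul
  rcases hc with rfl | rfl <;> simp [yExponent, specExponent] at this <;>
    obtain ⟨ha, rfl⟩ := this <;> simpa using ha

theorem stmt18_general (n : ℕ) (i₀ r : ℕ)
    (ε : ℤ)
    (s : A6) (hirr : Irreducible s)
    (hdvd : s ∣ (AddMonoidAlgebra.single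
        (Finsupp.single (1 : Fin 6) ((2 * (n - i₀) : ℕ) : ℤ)
          + Finsupp.single (0 : Fin 6) ((2 * (r - 1) : ℕ) : ℤ)
          + Finsupp.single (if ε = 1 then (2 : Fin 6) else 3) 1) (1 : ℂ)
      + AddMonoidAlgebra.single 0 1))
    [inst : IsDomain (A6 ⧸ Ideal.span {s})] :
    Function.Injective (fun lam : Fin n → ℤ => fun i : Fin n =>
      bar s (AddMonoidAlgebra.single (Finsupp.single (0 : Fin 6) 2) 1) ^ (lam i)
        * bar s (AddMonoidAlgebra.single (Finsupp.single (1 : Fin 6) 2) 1) ^ (rho lam i)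
        * bar s (AddMonoidAlgebra.single
            (Finsupp.single (2 : Fin 6) 1 + Finsupp.single (3 : Fin 6) 1) 1)
            ^ (sgn lam i)) := by
  have hc : (if ε = 1 then (2 : Fin 6) else 3) = 2 ∨ (if ε = 1 then (2 : Fin 6) else 3) = 3 := by
    split_ifs <;> simp
  rw [← one_def] at hdvd
  have hps := hirr.dvd_symm (prime_single_specExponent_add_one _ _ hc).irreducible hdvd
  intro lam mu h
  funext i
  have hi := congrFun h i
  simp only [bar_zpow_mul_zpow_mul_zpow] at hi
  have hdiv := hps.trans (dvd_single_sub_one_of_bar_eq s hi)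
  rw [yExponent_sub] at hdiv
  exact sub_eq_zero.1 (eq_zero_of_single_specExponent_add_one_dvd _ _ hc hdiv)

set_option synthInstance.maxHeartbeats 1000000 in
set_option maxHeartbeats 1000000 in
/-- under the exclusive specialization t^{n−i₀}q^{r−1}a*(b*)^{±1} = 1
(realized via an irreducible factor s of T^{2(n−i₀)}Q^{2(r−1)}T_n + 1 for ε = +1, resp. of
T^{2(n−i₀)}Q^{2(r−1)}T_0 + 1 for ε = −1, in the six-variable ring A, with K_s the fraction
field of A/(s)), the Y-eigenvalue map λ ↦ (q̄^{λ_i} t̄^{ρ(λ)_i} (ā*)^{σ(λ)_i})_i is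
injective on ℤ^n, where q̄ = (Q²)‾, t̄ = (T²)‾, ā* = (T_n T_0)‾. -/
theorem stmt18 (n : ℕ) (hn : 2 ≤ n) (i₀ r : ℕ)
    (hi₀1 : 1 ≤ i₀) (hi₀n : i₀ ≤ n) (hr : 2 ≤ r)
    (ε : ℤ) (hε : ε = 1 ∨ ε = -1)
    (s : A6) (hirr : Irreducible s)
    (hdvd : s ∣ (AddMonoidAlgebra.single
        (Finsupp.single (1 : Fin 6) ((2 * (n - i₀) : ℕ) : ℤ)
          + Finsupp.single (0 : Fin 6) ((2 * (r - 1) : ℕ) : ℤ)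
          + Finsupp.single (if ε = 1 then (2 : Fin 6) else 3) 1) (1 : ℂ)
      + AddMonoidAlgebra.single 0 1))
    [inst : IsDomain (A6 ⧸ Ideal.span {s})] :
    Function.Injective (fun lam : Fin n → ℤ => fun i : Fin n =>
      bar s (AddMonoidAlgebra.single (Finsupp.single (0 : Fin 6) 2) 1) ^ (lam i)
        * bar s (AddMonoidAlgebra.single (Finsupp.single (1 : Fin 6) 2) 1) ^ (rho lam i)
        * bar s (AddMonoidAlgebra.single
            (Finsupp.single (2 : Fin 6) 1 + Finsupp.single (3 : Fin 6) 1) 1)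
            ^ (sgn lam i)) :=
  stmt18_general n i₀ r ε s hirr hdvd (inst := inst)

end CCnDAHA
end
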